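/- arXiv:0904.2841 — 2 statements merged into one kernel-verified Lean document; each statement's English description precedes it below -/
import Mathlib

section
/- In D_n, for β = ε_i + ε_j with i < j, the number of unordered pairs of positive roots summing to β equals 2n − i − j − 1. -/
/-- The standard basis vector `ε_i` of `ℝ^n` (indices are 1-based, ambient type `ℕ → ℝ`). -/
noncomputable def eps (i : ℕ) : ℕ → ℝ := fun k => if k = i then 1 else 0

/-- The standard inner product on vectors supported on indices `0, …, n`. -/
noncomputable def ip (n : ℕ) (x y : ℕ → ℝ) : ℝ := ∑ k ∈ Finset.range (n + 1), x k * y k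

/-- Positive roots of `B_n`: `ε_i ± ε_j` for `1 ≤ i < j ≤ n` and `ε_i` for `1 ≤ i ≤ n`. -/
def PosB (n : ℕ) : Set (ℕ → ℝ) :=
  {v | ∃ i j : ℕ, 1 ≤ i ∧ i < j ∧ j ≤ n ∧ (v = eps i - eps j ∨ v = eps i + eps j)} ∪
  {v | ∃ i : ℕ, 1 ≤ i ∧ i ≤ n ∧ v = eps i}

/-- Positive roots of `C_n`: `ε_i ± ε_j` for `1 ≤ i < j ≤ n` and `2ε_i` for `1 ≤ i ≤ n`. -/
def PosC (n : ℕ) : Set (ℕ → ℝ) :=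
  {v | ∃ i j : ℕ, 1 ≤ i ∧ i < j ∧ j ≤ n ∧ (v = eps i - eps j ∨ v = eps i + eps j)} ∪
  {v | ∃ i : ℕ, 1 ≤ i ∧ i ≤ n ∧ v = (2 : ℝ) • eps i}

/-- Positive roots of `D_n`: `ε_i ± ε_j` for `1 ≤ i < j ≤ n`. -/
def PosD (n : ℕ) : Set (ℕ → ℝ) :=
  {v | ∃ i j : ℕ, 1 ≤ i ∧ i < j ∧ j ≤ n ∧ (v = eps i - eps j ∨ v = eps i + eps j)}

/-- The reflection `r_a(x) = x - (2(x,a)/(a,a)) a`. -/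
noncomputable def rfl' (n : ℕ) (a : ℕ → ℝ) : Function.End (ℕ → ℝ) :=
  fun x => x - (2 * ip n x a / ip n a a) • a

/-!
Write `β = ε_i + ε_j`. The coordinate sum is `0` on `ε_a - ε_b` and `2` on `ε_a + ε_b`, so in
`α + γ = β` exactly one summand is a difference `α = ε_a - ε_b`, and the pair is `{α, β - α}`.
Comparing coefficients at `a` and `b` shows that either `a = i < b`, `b ≠ j` (`n - i - 1`
choices), or `a = j < b` (`n - j` choices). Conversely each such `(a, b)` gives a pair, and
`{x, β - x} = {y, β - y}` forces `x = y` since `x + y = β` is again excluded by the coordinate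
sum. Hence the count is `(n - i - 1) + (n - j)`.
-/

open Finset

lemma eps_apply (a k : ℕ) : eps a k = (if k = a then 1 else 0 : ℕ) := by
  simp [eps]

noncomputable def coordSum (n : ℕ) : (ℕ → ℝ) →ₗ[ℝ] ℝ :=
  ∑ k ∈ range (n + 1), LinearMap.proj k

lemma coordSum_eps {n a : ℕ} (ha : a ≤ n) : coordSum n (eps a) = 1 := by
  simp [coordSum, eps, Nat.lt_succ_of_le ha]

lemma coordSum_eps_sub_eps {n a b : ℕ} (ha : a ≤ n) (hb : b ≤ n) :
    coordSum n (eps a - eps b) = 0 := by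
  rw [map_sub, coordSum_eps ha, coordSum_eps hb, sub_self]

lemma coordSum_eps_add_eps {n a b : ℕ} (ha : a ≤ n) (hb : b ≤ n) :
    coordSum n (eps a + eps b) = 2 := by
  rw [map_add, coordSum_eps ha, coordSum_eps hb, one_add_one_eq_two]

lemma eps_sub_eps_add_eps_sub_eps_ne {n a b c d i j : ℕ} (ha : a ≤ n) (hb : b ≤ n) (hc : c ≤ n)
    (hd : d ≤ n) (hi : i ≤ n) (hj : j ≤ n) : eps a - eps b + (eps c - eps d) ≠ eps i + eps j := by
  intro h
  have := congrArg (coordSum n) h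
  rw [map_add, coordSum_eps_sub_eps ha hb, coordSum_eps_sub_eps hc hd,
    coordSum_eps_add_eps hi hj] at this
  norm_num at this

lemma eps_add_eps_add_eps_add_eps_ne {n a b c d i j : ℕ} (ha : a ≤ n) (hb : b ≤ n) (hc : c ≤ n)
    (hd : d ≤ n) (hi : i ≤ n) (hj : j ≤ n) : eps a + eps b + (eps c + eps d) ≠ eps i + eps j := by
  intro h
  have := congrArg (coordSum n) h
  rw [map_add, coordSum_eps_add_eps ha hb, coordSum_eps_add_eps hc hd,
    coordSum_eps_add_eps hi hj] at this
  norm_num at this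

lemma eps_add_eps_mem_posD {n a b : ℕ} (ha : 1 ≤ a) (hb : 1 ≤ b) (han : a ≤ n) (hbn : b ≤ n)
    (hab : a ≠ b) : eps a + eps b ∈ PosD n := by
  rcases hab.lt_or_gt with h | h
  · exact ⟨a, b, ha, h, hbn, Or.inr rfl⟩
  · exact ⟨b, a, hb, h, han, Or.inr (add_comm _ _)⟩

lemma eps_sub_eps_inj {a b c d : ℕ} (hab : a ≠ b) (h : eps a - eps b = eps c - eps d) :
    a = c ∧ b = d := by
  have h' : eps a + eps d = eps c + eps b := by linear_combination h
  have ha := congrFun h' a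
  have hb := congrFun h' b
  simp only [Pi.add_apply, eps_apply, hab, hab.symm, ↓reduceIte] at ha hb
  norm_cast at ha hb
  split_ifs at ha hb <;> omega

lemma eq_of_eps_sub_add_eps_eq {a b c d i j : ℕ} (hab : a ≠ b) (hcd : c ≠ d)
    (h : eps a - eps b + (eps c + eps d) = eps i + eps j) : (a = i ∧ b ≠ j) ∨ a = j := by
  have h' : eps a + eps c + eps d = eps b + eps i + eps j := by linear_combination h
  have ha := congrFun h' a
  have hb := congrFun h' b
  simp only [Pi.add_apply, eps_apply, hab, hab.symm, ↓reduceIte] at ha hb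
  norm_cast at ha hb
  split_ifs at ha hb <;> omega

def complementPair {G : Type*} [AddCommGroup G] (β x : G) : Sym2 G := s(x, β - x)

lemma complementPair_eq_iff {G : Type*} [AddCommGroup G] {β x y : G} :
    complementPair β x = complementPair β y ↔ x = y ∨ x + y = β := by
  rw [complementPair, complementPair, Sym2.eq_iff]
  constructor
  · rintro (⟨h, -⟩ | ⟨h, -⟩)
    · exact Or.inl h
    · exact Or.inr (by rw [h, sub_add_cancel])
  · rintro (h | h)
    · exact Or.inl ⟨h, by rw [h]⟩
    · exact Or.inr ⟨eq_sub_of_add_eq h, by rw [← h, add_sub_cancel_left]⟩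

def posDPairs (n : ℕ) (β : ℕ → ℝ) : Set (Sym2 (ℕ → ℝ)) :=
  {p | ∃ α γ : ℕ → ℝ, p = s(α, γ) ∧ α ∈ PosD n ∧ γ ∈ PosD n ∧ α + γ = β}

def diffRootIndices (n i j : ℕ) : Finset (ℕ × ℕ) :=
  {i} ×ˢ (Ioc i n).erase j ∪ {j} ×ˢ Ioc j n

lemma mem_diffRootIndices {n i j a b : ℕ} :
    (a, b) ∈ diffRootIndices n i j ↔ (a = i ∧ b ≠ j ∨ a = j) ∧ a < b ∧ b ≤ n := by
  simp only [diffRootIndices, mem_union, mem_product, mem_singleton, mem_erase, mem_Ioc]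
  constructor
  · rintro (⟨rfl, hbj, hab, hbn⟩ | ⟨rfl, hab, hbn⟩)
    exacts [⟨Or.inl ⟨rfl, hbj⟩, hab, hbn⟩, ⟨Or.inr rfl, hab, hbn⟩]
  · rintro ⟨⟨rfl, hbj⟩ | rfl, hab, hbn⟩
    exacts [Or.inl ⟨rfl, hbj, hab, hbn⟩, Or.inr ⟨rfl, hab, hbn⟩]

lemma card_diffRootIndices {n i j : ℕ} (hij : i < j) (hj : j ≤ n) :
    #(diffRootIndices n i j) = (n - i - 1) + (n - j) := by
  have hdisj : Disjoint ({i} ×ˢ (Ioc i n).erase j) ({j} ×ˢ Ioc j n) :=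
    disjoint_product.mpr (Or.inl (disjoint_singleton.mpr hij.ne))
  rw [diffRootIndices, card_union_of_disjoint hdisj, card_product, card_product,
    card_erase_of_mem (mem_Ioc.mpr ⟨hij, hj⟩), Nat.card_Ioc, Nat.card_Ioc, card_singleton,
    card_singleton, one_mul, one_mul]

lemma mem_image_of_eps_sub_add_eps_eq {n i j a b c d : ℕ} (hab : a < b) (hbn : b ≤ n)
    (hcd : c < d) (hsum : eps a - eps b + (eps c + eps d) = eps i + eps j) :
    s(eps a - eps b, eps c + eps d) ∈
      (fun ab : ℕ × ℕ => complementPair (eps i + eps j) (eps ab.1 - eps ab.2)) ''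
        diffRootIndices n i j := by
  refine ⟨(a, b), ?_, ?_⟩
  · rw [mem_coe, mem_diffRootIndices]
    exact ⟨eq_of_eps_sub_add_eps_eq hab.ne hcd.ne hsum, hab, hbn⟩
  · dsimp only [complementPair]
    rw [eq_sub_of_add_eq' hsum]

lemma posDPairs_eps_add_eps {n i j : ℕ} (hi : 1 ≤ i) (hij : i < j) (hj : j ≤ n) :
    posDPairs n (eps i + eps j) =
      (fun ab : ℕ × ℕ => complementPair (eps i + eps j) (eps ab.1 - eps ab.2)) ''
        diffRootIndices n i j := by
  ext p
  constructor
  · rintro ⟨α, γ, rfl, ⟨a, b, ha, hab, hbn, rfl | rfl⟩, ⟨c, d, hc, hcd, hdn, rfl | rfl⟩, hsum⟩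
    · exact absurd hsum (eps_sub_eps_add_eps_sub_eps_ne (by omega) hbn (by omega) hdn (by omega) hj)
    · exact mem_image_of_eps_sub_add_eps_eq hab hbn hcd hsum
    · rw [Sym2.eq_swap]
      exact mem_image_of_eps_sub_add_eps_eq hcd hdn hab (by rw [add_comm, hsum])
    · exact absurd hsum (eps_add_eps_add_eps_add_eps_ne (by omega) hbn (by omega) hdn (by omega) hj)
  · rintro ⟨⟨a, b⟩, hmem, rfl⟩
    rw [mem_coe, mem_diffRootIndices] at hmem
    obtain ⟨⟨rfl, hbj⟩ | rfl, hab, hbn⟩ := hmem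
    · refine ⟨_, _, rfl, ⟨a, b, hi, hab, hbn, Or.inl rfl⟩, ?_, add_sub_cancel _ _⟩
      rw [show eps a + eps j - (eps a - eps b) = eps j + eps b by abel]
      exact eps_add_eps_mem_posD (by omega) (by omega) hj hbn (Ne.symm hbj)
    · refine ⟨_, _, rfl, ⟨a, b, by omega, hab, hbn, Or.inl rfl⟩, ?_, add_sub_cancel _ _⟩
      rw [show eps i + eps a - (eps a - eps b) = eps i + eps b by abel]
      exact eps_add_eps_mem_posD hi (by omega) (by omega) hbn (by omega)

lemma injOn_complementPair_eps_sub_eps {n i j : ℕ} (hij : i < j) (hj : j ≤ n) :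
    Set.InjOn (fun ab : ℕ × ℕ => complementPair (eps i + eps j) (eps ab.1 - eps ab.2))
      (diffRootIndices n i j) := by
  rintro ⟨a, b⟩ hab ⟨c, d⟩ hcd h
  rw [mem_coe, mem_diffRootIndices] at hab hcd
  rcases complementPair_eq_iff.mp h with h | h
  · obtain ⟨rfl, rfl⟩ := eps_sub_eps_inj hab.2.1.ne h
    rfl
  · exact absurd h (eps_sub_eps_add_eps_sub_eps_ne (by omega) hab.2.2 (by omega) hcd.2.2
      (by omega) hj)

/-- In `D_n`, for `β = ε_i + ε_j` with `1 ≤ i < j ≤ n`, the number of unordered pairs of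
positive roots summing to `β` equals `2n - i - j - 1`. -/
theorem stmt10 (n i j : ℕ) (hi : 1 ≤ i) (hij : i < j) (hj : j ≤ n) :
    Set.ncard {p : Sym2 (ℕ → ℝ) | ∃ α γ : ℕ → ℝ,
        p = s(α, γ) ∧ α ∈ PosD n ∧ γ ∈ PosD n ∧ α + γ = eps i + eps j}
      = 2 * n - i - j - 1 := by
  change (posDPairs n (eps i + eps j)).ncard = _
  rw [posDPairs_eps_add_eps hi hij hj, (injOn_complementPair_eps_sub_eps hij hj).ncard_image,
    Set.ncard_coe_finset, card_diffRootIndices hij hj]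
  omega
end

section
/- Let Φ = B_n or D_n, D ⊆ Φ⁺ orthogonal, and σ = ∏_{β∈D} r_β. Suppose D ∩ C_1 = {ε_1 − ε_j} for some j (i.e., the unique root of D involving coordinate 1 is ε_1 − ε_j). Then for any α ∈ Φ⁺ \ {ε_1 − ε_j} with col(α) = j or row index ±j (i.e., α ∈ C_j ∪ R_j ∪ R_{−j}) and with first coordinate 0, σ(α) is negative if and only if (α, ε_j) < 0. -/
/-! ### Auxiliary lemmas -/

lemma eps_apply_self (m : ℕ) : eps m m = 1 := by simp [eps]

lemma eps_apply_ne {k m : ℕ} (h : k ≠ m) : eps m k = 0 := by simp [eps, h]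

lemma ip_eps_right (n : ℕ) (x : ℕ → ℝ) {m : ℕ} (hm : m ≤ n) : ip n x (eps m) = x m := by
  unfold ip eps
  rw [Finset.sum_eq_single m]
  · simp
  · intro k _ hkm; simp [hkm]
  · intro h; exact absurd (Finset.mem_range.2 (Nat.lt_succ_of_le hm)) h

lemma ip_comm (n : ℕ) (x y : ℕ → ℝ) : ip n x y = ip n y x := by
  unfold ip; exact Finset.sum_congr rfl fun k _ => mul_comm _ _

lemma ip_add_left (n : ℕ) (x y z : ℕ → ℝ) : ip n (x + y) z = ip n x z + ip n y z := by
  unfold ip; rw [← Finset.sum_add_distrib]; exact Finset.sum_congr rfl fun k _ => by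
    simp [add_mul]

lemma ip_neg_left (n : ℕ) (x z : ℕ → ℝ) : ip n (-x) z = -ip n x z := by
  unfold ip; rw [← Finset.sum_neg_distrib]; exact Finset.sum_congr rfl fun k _ => by simp

lemma ip_sub_left (n : ℕ) (x y z : ℕ → ℝ) : ip n (x - y) z = ip n x z - ip n y z := by
  rw [sub_eq_add_neg, ip_add_left, ip_neg_left, sub_eq_add_neg]

lemma ip_smul_left (n : ℕ) (c : ℝ) (x z : ℕ → ℝ) : ip n (c • x) z = c * ip n x z := by
  unfold ip; rw [Finset.mul_sum]; exact Finset.sum_congr rfl fun k _ => by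
    simp [mul_assoc]

lemma ip_sub_right (n : ℕ) (x y z : ℕ → ℝ) : ip n x (y - z) = ip n x y - ip n x z := by
  rw [ip_comm, ip_sub_left, ip_comm n y, ip_comm n z]

lemma ip_add_right (n : ℕ) (x y z : ℕ → ℝ) : ip n x (y + z) = ip n x y + ip n x z := by
  rw [ip_comm, ip_add_left, ip_comm n y, ip_comm n z]

lemma ip_zero_left (n : ℕ) (z : ℕ → ℝ) : ip n 0 z = 0 := by unfold ip; simp

lemma rfl'_apply (n : ℕ) (a x : ℕ → ℝ) : rfl' n a x = x - (2 * ip n x a / ip n a a) • a := rfl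

lemma rfl'_add (n : ℕ) (a x y : ℕ → ℝ) : rfl' n a (x + y) = rfl' n a x + rfl' n a y := by
  rw [rfl'_apply, rfl'_apply, rfl'_apply, ip_add_left,
    show 2 * (ip n x a + ip n y a) / ip n a a
      = 2 * ip n x a / ip n a a + 2 * ip n y a / ip n a a by ring, add_smul]
  abel

lemma rfl'_neg (n : ℕ) (a x : ℕ → ℝ) : rfl' n a (-x) = -rfl' n a x := by
  rw [rfl'_apply, rfl'_apply, ip_neg_left,
    show 2 * -ip n x a / ip n a a = -(2 * ip n x a / ip n a a) by ring, neg_smul]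
  abel

lemma rfl'_sub (n : ℕ) (a x y : ℕ → ℝ) : rfl' n a (x - y) = rfl' n a x - rfl' n a y := by
  rw [sub_eq_add_neg, rfl'_add, rfl'_neg, sub_eq_add_neg]

lemma rfl'_zero (n : ℕ) (a : ℕ → ℝ) : rfl' n a 0 = 0 := by
  rw [rfl'_apply, ip_zero_left]; simp

lemma prod_cons_apply (n : ℕ) (a : ℕ → ℝ) (M : List (ℕ → ℝ)) (x : ℕ → ℝ) :
    (((a :: M).map (rfl' n)).prod) x = rfl' n a (((M.map (rfl' n)).prod) x) := rfl

lemma ip_eps_sub (n : ℕ) (x : ℕ → ℝ) {a b : ℕ} (ha : a ≤ n) (hb : b ≤ n) :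
    ip n x (eps a - eps b) = x a - x b := by
  rw [ip_sub_right, ip_eps_right n x ha, ip_eps_right n x hb]

lemma ip_eps_add (n : ℕ) (x : ℕ → ℝ) {a b : ℕ} (ha : a ≤ n) (hb : b ≤ n) :
    ip n x (eps a + eps b) = x a + x b := by
  rw [ip_add_right, ip_eps_right n x ha, ip_eps_right n x hb]

lemma rfl'_sub_form (n : ℕ) {a b : ℕ} (hab : a ≠ b) (ha : a ≤ n) (hb : b ≤ n) (x : ℕ → ℝ) :
    rfl' n (eps a - eps b) x = x - (x a - x b) • (eps a - eps b) := by
  rw [rfl'_apply, ip_eps_sub n x ha hb, ip_eps_sub n _ ha hb]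
  have h1 : (eps a - eps b) a = 1 := by
    simp [Pi.sub_apply, eps_apply_self, eps_apply_ne hab]
  have h2 : (eps a - eps b) b = -1 := by
    simp [Pi.sub_apply, eps_apply_self, eps_apply_ne (Ne.symm hab)]
  rw [h1, h2]
  norm_num

lemma rfl'_add_form (n : ℕ) {a b : ℕ} (hab : a ≠ b) (ha : a ≤ n) (hb : b ≤ n) (x : ℕ → ℝ) :
    rfl' n (eps a + eps b) x = x - (x a + x b) • (eps a + eps b) := by
  rw [rfl'_apply, ip_eps_add n x ha hb, ip_eps_add n _ ha hb]
  have h1 : (eps a + eps b) a = 1 := by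
    simp [Pi.add_apply, eps_apply_self, eps_apply_ne hab]
  have h2 : (eps a + eps b) b = 1 := by
    simp [Pi.add_apply, eps_apply_self, eps_apply_ne (Ne.symm hab)]
  rw [h1, h2]
  norm_num

lemma rfl'_single_form (n : ℕ) {a : ℕ} (ha : a ≤ n) (x : ℕ → ℝ) :
    rfl' n (eps a) x = x - (2 * x a) • (eps a) := by
  rw [rfl'_apply, ip_eps_right n x ha, ip_eps_right n _ ha, eps_apply_self]
  norm_num

/-- A root with zero first and `j`-th coordinate. -/
def Nice (n j : ℕ) (β : ℕ → ℝ) : Prop :=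
  (∃ a b : ℕ, 1 ≤ a ∧ a < b ∧ b ≤ n ∧ a ≠ 1 ∧ a ≠ j ∧ b ≠ 1 ∧ b ≠ j ∧
    (β = eps a - eps b ∨ β = eps a + eps b)) ∨
  (∃ a : ℕ, 1 ≤ a ∧ a ≤ n ∧ a ≠ 1 ∧ a ≠ j ∧ β = eps a)

lemma step_eps (n j : ℕ) {β : ℕ → ℝ} (hβ : Nice n j β) {m : ℕ}
    (hm1 : 1 < m) (hmn : m ≤ n) (hmj : m ≠ j) :
    ∃ m', 1 < m' ∧ m' ≤ n ∧ m' ≠ j ∧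
      (rfl' n β (eps m) = eps m' ∨ rfl' n β (eps m) = -eps m') := by
  rcases hβ with ⟨a, b, ha1, hab, hbn, ha1', haj, hb1, hbj, hform | hform⟩ |
    ⟨a, ha1, han, ha1', haj, hform⟩
  · -- β = eps a - eps b
    have hab' : a ≠ b := Nat.ne_of_lt hab
    have han : a ≤ n := le_trans (le_of_lt hab) hbn
    subst hform
    rw [rfl'_sub_form n hab' han hbn]
    rcases eq_or_ne m a with rfl | hma
    · refine ⟨b, by omega, hbn, hbj, Or.inl ?_⟩
      rw [eps_apply_self, eps_apply_ne (fun h => hab' h.symm)]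
      norm_num
    · rcases eq_or_ne m b with rfl | hmb
      · refine ⟨a, by omega, han, haj, Or.inl ?_⟩
        rw [eps_apply_self, eps_apply_ne hab']
        norm_num
      · refine ⟨m, hm1, hmn, hmj, Or.inl ?_⟩
        rw [eps_apply_ne (fun h => hma h.symm), eps_apply_ne (fun h => hmb h.symm)]
        norm_num
  · -- β = eps a + eps b
    have hab' : a ≠ b := Nat.ne_of_lt hab
    have han : a ≤ n := le_trans (le_of_lt hab) hbn
    subst hform
    rw [rfl'_add_form n hab' han hbn]
    rcases eq_or_ne m a with rfl | hma
    · refine ⟨b, by omega, hbn, hbj, Or.inr ?_⟩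
      rw [eps_apply_self, eps_apply_ne (fun h => hab' h.symm)]
      norm_num
    · rcases eq_or_ne m b with rfl | hmb
      · refine ⟨a, by omega, han, haj, Or.inr ?_⟩
        rw [eps_apply_self, eps_apply_ne hab']
        norm_num
      · refine ⟨m, hm1, hmn, hmj, Or.inl ?_⟩
        rw [eps_apply_ne (fun h => hma h.symm), eps_apply_ne (fun h => hmb h.symm)]
        norm_num
  · -- β = eps a
    subst hform
    rw [rfl'_single_form n han]
    rcases eq_or_ne m a with rfl | hma
    · refine ⟨m, by omega, han, haj, Or.inr ?_⟩
      rw [eps_apply_self]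
      rw [show ((2:ℝ)*1) = 1 + 1 by norm_num, add_smul, one_smul]
      abel
    · refine ⟨m, hm1, hmn, hmj, Or.inl ?_⟩
      rw [eps_apply_ne (fun h => hma h.symm)]
      norm_num

lemma commute_rfl' (n : ℕ) {a b : ℕ → ℝ} (h : ip n a b = 0) :
    Commute (rfl' n a) (rfl' n b) := by
  have h' : ip n b a = 0 := (ip_comm n b a).trans h
  show rfl' n a * rfl' n b = rfl' n b * rfl' n a
  funext x
  show rfl' n a (rfl' n b x) = rfl' n b (rfl' n a x)
  simp only [rfl'_apply, ip_sub_left, ip_smul_left, h, h', mul_zero, sub_zero]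
  abel

lemma prod_add_apply (n : ℕ) (M : List (ℕ → ℝ)) (x y : ℕ → ℝ) :
    ((M.map (rfl' n)).prod) (x + y) = ((M.map (rfl' n)).prod) x + ((M.map (rfl' n)).prod) y := by
  induction M with
  | nil => rfl
  | cons a M ih => rw [prod_cons_apply, prod_cons_apply, prod_cons_apply, ih, rfl'_add]

lemma prod_sub_apply (n : ℕ) (M : List (ℕ → ℝ)) (x y : ℕ → ℝ) :
    ((M.map (rfl' n)).prod) (x - y) = ((M.map (rfl' n)).prod) x - ((M.map (rfl' n)).prod) y := by
  induction M with
  | nil => rfl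
  | cons a M ih => rw [prod_cons_apply, prod_cons_apply, prod_cons_apply, ih, rfl'_sub]

lemma prod_zero_apply (n : ℕ) (M : List (ℕ → ℝ)) :
    ((M.map (rfl' n)).prod) (0 : ℕ → ℝ) = 0 := by
  induction M with
  | nil => rfl
  | cons a M ih => rw [prod_cons_apply, ih, rfl'_zero]

lemma prod_neg_apply (n : ℕ) (M : List (ℕ → ℝ)) (x : ℕ → ℝ) :
    ((M.map (rfl' n)).prod) (-x) = -((M.map (rfl' n)).prod) x := by
  rw [show -x = 0 - x by rw [zero_sub], prod_sub_apply, prod_zero_apply, zero_sub]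

lemma rfl'_fix_eps (n j : ℕ) (hjn : j ≤ n) {a : ℕ → ℝ} (h : a j = 0) :
    rfl' n a (eps j) = eps j := by
  rw [rfl'_apply, (ip_comm n (eps j) a).trans ((ip_eps_right n a hjn)), h]
  simp

lemma prod_fix_eps (n j : ℕ) (hjn : j ≤ n) (M : List (ℕ → ℝ)) (hM : ∀ β ∈ M, β j = 0) :
    ((M.map (rfl' n)).prod) (eps j) = eps j := by
  induction M with
  | nil => rfl
  | cons a M ih =>
      rw [prod_cons_apply, ih (fun β hβ => hM β (List.mem_cons_of_mem a hβ)),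
        rfl'_fix_eps n j hjn (hM a (List.mem_cons_self (a := a) (l := M)))]

lemma prod_S (n j : ℕ) (M : List (ℕ → ℝ)) (hM : ∀ β ∈ M, Nice n j β) {m : ℕ}
    (hm1 : 1 < m) (hmn : m ≤ n) (hmj : m ≠ j) :
    ∃ m', 1 < m' ∧ m' ≤ n ∧ m' ≠ j ∧
      (((M.map (rfl' n)).prod) (eps m) = eps m' ∨
        ((M.map (rfl' n)).prod) (eps m) = -eps m') := by
  induction M with
  | nil => exact ⟨m, hm1, hmn, hmj, Or.inl rfl⟩
  | cons a M ih =>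
      obtain ⟨m', h1, h2, h3, h4⟩ := ih (fun β hβ => hM β (List.mem_cons_of_mem a hβ))
      have ha : Nice n j a := hM a (List.mem_cons_self (a := a) (l := M))
      obtain ⟨m'', g1, g2, g3, g4⟩ := step_eps n j ha h1 h2 h3
      rcases h4 with h4 | h4
      · exact ⟨m'', g1, g2, g3, by rw [prod_cons_apply, h4]; exact g4⟩
      · refine ⟨m'', g1, g2, g3, ?_⟩
        rw [prod_cons_apply, h4, rfl'_neg]
        rcases g4 with g4 | g4
        · exact Or.inr (by rw [g4])
        · exact Or.inl (by rw [g4, neg_neg])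

lemma pos_first_nonneg {n : ℕ} {Pos : Set (ℕ → ℝ)} (hPos : Pos = PosB n ∨ Pos = PosD n)
    {v : ℕ → ℝ} (hv : v ∈ Pos) : 0 ≤ v 1 := by
  have hv' : (∃ i k : ℕ, 1 ≤ i ∧ i < k ∧ k ≤ n ∧ (v = eps i - eps k ∨ v = eps i + eps k)) ∨
      (∃ i : ℕ, 1 ≤ i ∧ i ≤ n ∧ v = eps i) := by
    rcases hPos with rfl | rfl
    · exact hv
    · exact Or.inl hv
  rcases hv' with ⟨i, k, hi, hik, hkn, rfl | rfl⟩ | ⟨i, hi, hin, rfl⟩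
  · simp only [Pi.sub_apply, eps]
    rw [if_neg (show (1:ℕ) ≠ k by omega)]
    split_ifs <;> norm_num
  · simp only [Pi.add_apply, eps]
    rw [if_neg (show (1:ℕ) ≠ k by omega)]
    split_ifs <;> norm_num
  · simp only [eps]
    split_ifs <;> norm_num

lemma nice_of {n j : ℕ} (h1j : 1 < j) {Pos : Set (ℕ → ℝ)}
    (hPos : Pos = PosB n ∨ Pos = PosD n) {β : ℕ → ℝ} (hβ : β ∈ Pos)
    (hb1 : β 1 = 0) (hbj : β j = 0) : Nice n j β := by
  have hβ' : (∃ i k : ℕ, 1 ≤ i ∧ i < k ∧ k ≤ n ∧ (β = eps i - eps k ∨ β = eps i + eps k)) ∨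
      (∃ i : ℕ, 1 ≤ i ∧ i ≤ n ∧ β = eps i) := by
    rcases hPos with rfl | rfl
    · exact hβ
    · exact Or.inl hβ
  rcases hβ' with ⟨i, k, hi, hik, hkn, rfl | rfl⟩ | ⟨i, hi, hin, rfl⟩
  · have hi1 : i ≠ 1 := by
      rintro rfl; simp [eps, show (1:ℕ) ≠ k by omega] at hb1
    have hij : i ≠ j := by
      rintro rfl; simp [eps, show (i:ℕ) ≠ k by omega] at hbj
    have hkj : k ≠ j := by
      rintro rfl; simp [eps, hij, show (k:ℕ) ≠ i by omega] at hbj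
    exact Or.inl ⟨i, k, hi, hik, hkn, hi1, hij, by omega, hkj, Or.inl rfl⟩
  · have hi1 : i ≠ 1 := by
      rintro rfl; simp [eps, show (1:ℕ) ≠ k by omega] at hb1
    have hij : i ≠ j := by
      rintro rfl; simp [eps, show (i:ℕ) ≠ k by omega] at hbj
    have hkj : k ≠ j := by
      rintro rfl; simp [eps, show (k:ℕ) ≠ i by omega] at hbj
    exact Or.inl ⟨i, k, hi, hik, hkn, hi1, hij, by omega, hkj, Or.inr rfl⟩
  · have hi1 : i ≠ 1 := by rintro rfl; simp [eps] at hb1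
    have hij : i ≠ j := by rintro rfl; simp [eps] at hbj
    exact Or.inr ⟨i, hi, hin, hi1, hij, rfl⟩

lemma classify {n j : ℕ} (h1j : 1 < j) (hjn : j ≤ n) {Pos : Set (ℕ → ℝ)}
    (hPos : Pos = PosB n ∨ Pos = PosD n) {α : ℕ → ℝ} (hα : α ∈ Pos)
    (h1 : α 1 = 0) (hjc : α j ≠ 0) :
    (∃ ρ, α = eps j + ρ ∧ (ρ = 0 ∨ ∃ m, 1 < m ∧ m ≤ n ∧ m ≠ j ∧
      (ρ = eps m ∨ ρ = -eps m))) ∨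
    (∃ m, 1 < m ∧ m ≤ n ∧ m ≠ j ∧ α = eps m - eps j) := by
  have hα' : (∃ i k : ℕ, 1 ≤ i ∧ i < k ∧ k ≤ n ∧ (α = eps i - eps k ∨ α = eps i + eps k)) ∨
      (∃ i : ℕ, 1 ≤ i ∧ i ≤ n ∧ α = eps i) := by
    rcases hPos with rfl | rfl
    · exact hα
    · exact Or.inl hα
  rcases hα' with ⟨i, k, hi, hik, hkn, rfl | rfl⟩ | ⟨i, hi, hin, rfl⟩
  · have hi1 : i ≠ 1 := by
      rintro rfl; simp [eps, show (1:ℕ) ≠ k by omega] at h1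
    have hcase : i = j ∨ k = j := by
      by_contra h
      push_neg at h
      exact hjc (by simp [eps, show j ≠ i by omega, show j ≠ k by omega])
    rcases hcase with rfl | rfl
    · exact Or.inl ⟨-eps k, by rw [sub_eq_add_neg],
        Or.inr ⟨k, by omega, hkn, by omega, Or.inr rfl⟩⟩
    · exact Or.inr ⟨i, by omega, by omega, by omega, rfl⟩
  · have hi1 : i ≠ 1 := by
      rintro rfl; simp [eps, show (1:ℕ) ≠ k by omega] at h1
    have hcase : i = j ∨ k = j := by
      by_contra h
      push_neg at h
      exact hjc (by simp [eps, show j ≠ i by omega, show j ≠ k by omega])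
    rcases hcase with rfl | rfl
    · exact Or.inl ⟨eps k, by rw [add_comm],
        Or.inr ⟨k, by omega, hkn, by omega, Or.inl rfl⟩⟩
    · exact Or.inl ⟨eps i, by rw [add_comm],
        Or.inr ⟨i, by omega, by omega, by omega, Or.inl rfl⟩⟩
  · have hij : i = j := by
      by_contra h
      exact hjc (by simp [eps, show j ≠ i by omega])
    subst hij
    exact Or.inl ⟨0, (add_zero _).symm, Or.inl rfl⟩

lemma mem_pos_pair {n : ℕ} {Pos : Set (ℕ → ℝ)} (hPos : Pos = PosB n ∨ Pos = PosD n)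
    {m : ℕ} (hm1 : 1 < m) (hmn : m ≤ n) :
    eps 1 - eps m ∈ Pos ∧ eps 1 + eps m ∈ Pos := by
  rcases hPos with rfl | rfl
  · exact ⟨Or.inl ⟨1, m, le_refl 1, hm1, hmn, Or.inl rfl⟩,
      Or.inl ⟨1, m, le_refl 1, hm1, hmn, Or.inr rfl⟩⟩
  · exact ⟨⟨1, m, le_refl 1, hm1, hmn, Or.inl rfl⟩,
      ⟨1, m, le_refl 1, hm1, hmn, Or.inr rfl⟩⟩

open Classical in
/-- Let `Φ ∈ {B_n, D_n}`, `D ⊆ Φ⁺` orthogonal with `D ∩ C_1 = {ε_1 - ε_j}` (every other root of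
`D` has zero first and `j`-th coordinate), and `σ = ∏_{β ∈ D} r_β`. Then for a positive root
`α` with zero first coordinate and nonzero `j`-th coordinate, `σ(α)` is negative iff
`(α, ε_j) < 0`. -/
theorem stmt15 (n j : ℕ) (h1j : 1 < j) (hj : j ≤ n)
    (Pos : Set (ℕ → ℝ)) (hPos : Pos = PosB n ∨ Pos = PosD n)
    (D : Finset (ℕ → ℝ)) (hD : ↑D ⊆ Pos)
    (horth : ∀ a ∈ D, ∀ b ∈ D, a ≠ b → ip n a b = 0)
    (hmem : eps 1 - eps j ∈ D)
    (hrest : ∀ β ∈ D, β ≠ eps 1 - eps j → β 1 = 0 ∧ β j = 0)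
    (L : List (ℕ → ℝ)) (hL : L.Nodup) (hLD : L.toFinset = D)
    (α : ℕ → ℝ) (hα : α ∈ Pos) (h1 : α 1 = 0) (hjc : α j ≠ 0) :
    -((L.map (rfl' n)).prod α) ∈ Pos ↔ ip n α (eps j) < 0 := by
  have hn1 : 1 ≤ n := le_trans (le_of_lt h1j) hj
  set β₀ : ℕ → ℝ := eps 1 - eps j with hβ₀
  have hβ₀L : β₀ ∈ L := by rw [← List.mem_toFinset, hLD]; exact hmem
  set L' := L.erase β₀ with hL'
  -- rearrange the product so that `r_{β₀}` is applied last
  have hperm : (L.map (rfl' n)).Perm ((β₀ :: L').map (rfl' n)) :=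
    (List.perm_cons_erase hβ₀L).map (rfl' n)
  have hpw : (L.map (rfl' n)).Pairwise Commute := by
    rw [List.pairwise_map]
    refine List.Pairwise.imp_of_mem ?_ hL
    intro a b ha hb hne
    exact commute_rfl' n (horth a (hLD ▸ List.mem_toFinset.2 ha)
      b (hLD ▸ List.mem_toFinset.2 hb) hne)
  have hprod : (L.map (rfl' n)).prod = rfl' n β₀ * (L'.map (rfl' n)).prod := by
    rw [hperm.prod_eq' hpw]; rfl
  -- facts about elements of `L'`
  have hL'fact : ∀ β ∈ L', β ∈ Pos ∧ β 1 = 0 ∧ β j = 0 := by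
    intro β hβ
    have h := (List.Nodup.mem_erase_iff hL).1 hβ
    have hβD : β ∈ D := hLD ▸ List.mem_toFinset.2 h.2
    exact ⟨hD hβD, (hrest β hβD h.1).1, (hrest β hβD h.1).2⟩
  have hL'nice : ∀ β ∈ L', Nice n j β := fun β hβ =>
    nice_of h1j hPos (hL'fact β hβ).1 (hL'fact β hβ).2.1 (hL'fact β hβ).2.2
  have hL'j : ∀ β ∈ L', β j = 0 := fun β hβ => (hL'fact β hβ).2.2
  -- action of `r_{β₀}`
  have h1j' : (1:ℕ) ≠ j := by omega
  have hfix0 : ∀ w : ℕ → ℝ, w 1 = 0 → w j = 0 → rfl' n β₀ w = w := by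
    intro w hw1 hwj
    rw [hβ₀, rfl'_sub_form n h1j' hn1 hj, hw1, hwj]
    norm_num
  have hswap : rfl' n β₀ (eps j) = eps 1 := by
    rw [hβ₀, rfl'_sub_form n h1j' hn1 hj, eps_apply_ne h1j', eps_apply_self]
    norm_num
  have hip : ip n α (eps j) = α j := ip_eps_right n α hj
  rcases classify h1j hj hPos hα h1 hjc with ⟨ρ, hαρ, hρ⟩ | ⟨m, hm1, hmn, hmj, hαm⟩
  · -- `α = ε_j + ρ`, positive `j`-coordinate: `σ(α)` is positive
    obtain ⟨w, hwdef, hw1, hwj⟩ :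
        ∃ w, ((L'.map (rfl' n)).prod) ρ = w ∧ w 1 = 0 ∧ w j = 0 := by
      rcases hρ with rfl | ⟨m, hm1, hmn, hmj, rfl | rfl⟩
      · exact ⟨0, prod_zero_apply n L', rfl, rfl⟩
      · obtain ⟨m', g1, g2, g3, g4 | g4⟩ := prod_S n j L' hL'nice hm1 hmn hmj
        · exact ⟨eps m', g4, eps_apply_ne (by omega),
            eps_apply_ne (fun h => g3 h.symm)⟩
        · refine ⟨-eps m', g4, ?_, ?_⟩
          · rw [Pi.neg_apply, eps_apply_ne (show (1:ℕ) ≠ m' by omega)]; ring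
          · rw [Pi.neg_apply, eps_apply_ne (show j ≠ m' from fun h => g3 h.symm)]; ring
      · obtain ⟨m', g1, g2, g3, g4 | g4⟩ := prod_S n j L' hL'nice hm1 hmn hmj
        · refine ⟨-eps m', by rw [prod_neg_apply, g4], ?_, ?_⟩
          · rw [Pi.neg_apply, eps_apply_ne (show (1:ℕ) ≠ m' by omega)]; ring
          · rw [Pi.neg_apply, eps_apply_ne (show j ≠ m' from fun h => g3 h.symm)]; ring
        · exact ⟨eps m', by rw [prod_neg_apply, g4, neg_neg], eps_apply_ne (by omega),
            eps_apply_ne (fun h => g3 h.symm)⟩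
    have hαj : α j = 1 := by
      rw [hαρ, Pi.add_apply, eps_apply_self]
      rcases hρ with rfl | ⟨m, hm1, hmn, hmj, rfl | rfl⟩
      · simp
      · rw [eps_apply_ne (show j ≠ m from fun h => hmj h.symm)]; ring
      · rw [Pi.neg_apply, eps_apply_ne (show j ≠ m from fun h => hmj h.symm)]; ring
    have hσ : (L.map (rfl' n)).prod α = eps 1 + w := by
      rw [hprod]
      show rfl' n β₀ (((L'.map (rfl' n)).prod) α) = _
      rw [hαρ, prod_add_apply, prod_fix_eps n j hj L' hL'j, hwdef, rfl'_add, hswap,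
        hfix0 w hw1 hwj]
    rw [hσ, hip, hαj]
    constructor
    · intro hmem'
      exfalso
      have hge := pos_first_nonneg hPos hmem'
      have hval : (-(eps 1 + w)) 1 = -1 := by
        rw [Pi.neg_apply, Pi.add_apply, eps_apply_self, hw1]; ring
      rw [hval] at hge
      linarith
    · intro h; linarith
  · -- `α = ε_m - ε_j`, negative `j`-coordinate: `σ(α)` is negative
    have hαj : α j = -1 := by
      rw [hαm, Pi.sub_apply, eps_apply_ne (show j ≠ m from fun h => hmj h.symm),
        eps_apply_self]
      ring
    obtain ⟨m', g1, g2, g3, g4⟩ := prod_S n j L' hL'nice hm1 hmn hmj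
    have hm'1 : (1:ℕ) ≠ m' := by omega
    have hm'j : j ≠ m' := fun h => g3 h.symm
    rcases g4 with g4 | g4
    · have hσ : (L.map (rfl' n)).prod α = eps m' - eps 1 := by
        rw [hprod]
        show rfl' n β₀ (((L'.map (rfl' n)).prod) α) = _
        rw [hαm, prod_sub_apply, prod_fix_eps n j hj L' hL'j, g4, rfl'_sub, hswap,
          hfix0 (eps m') (eps_apply_ne hm'1) (eps_apply_ne hm'j)]
      rw [hσ, hip, hαj]
      constructor
      · intro _; norm_num
      · intro _
        rw [neg_sub]
        exact (mem_pos_pair hPos g1 g2).1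
    · have hσ : (L.map (rfl' n)).prod α = -eps m' - eps 1 := by
        rw [hprod]
        show rfl' n β₀ (((L'.map (rfl' n)).prod) α) = _
        rw [hαm, prod_sub_apply, prod_fix_eps n j hj L' hL'j, g4, rfl'_sub, hswap]
        have : rfl' n β₀ (-eps m') = -eps m' := by
          refine hfix0 (-eps m') ?_ ?_
          · rw [Pi.neg_apply, eps_apply_ne hm'1]; ring
          · rw [Pi.neg_apply, eps_apply_ne hm'j]; ring
        rw [this]
      rw [hσ, hip, hαj]
      constructor
      · intro _; norm_num
      · intro _
        rw [show -(-eps m' - eps 1) = eps 1 + eps m' by abel]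
        exact (mem_pos_pair hPos g1 g2).2
end
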